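/- Let A ∈ M_n⁺ be positive definite, E an orthogonal projection in M_n, and f an operator monotone function on [0,∞) with f(0) = 0; set f̂(x) := f(x)/x for x > 0 and f̂(0) := 0. Then E f̂(E A^{−1} E) E = A^{1/2} f(A^{−1/2} E A^{−1/2}) A^{1/2}. -/

import Mathlib

open Matrix Finset
open scoped ComplexOrder

/-- Functional calculus on a Hermitian matrix (junk value `0` if not Hermitian). -/
noncomputable def cfcH {n : ℕ} (f : ℝ → ℝ) (A : Matrix (Fin n) (Fin n) ℂ) :
    Matrix (Fin n) (Fin n) ℂ :=
  if hA : A.IsHermitian then hA.cfc f else 0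

/-- Real power of a (Hermitian) matrix via functional calculus. -/
noncomputable def mpow {n : ℕ} (A : Matrix (Fin n) (Fin n) ℂ) (p : ℝ) :
    Matrix (Fin n) (Fin n) ℂ :=
  cfcH (fun x : ℝ => x ^ p) A

/-- Eigenvalues of a Hermitian matrix arranged in decreasing order (junk `0` otherwise). -/
noncomputable def eigsDesc {n : ℕ} (A : Matrix (Fin n) (Fin n) ℂ) : Fin n → ℝ :=
  if hA : A.IsHermitian then fun i => (hA.eigenvalues ∘ Tuple.sort hA.eigenvalues) i.rev
  else 0

/-- Operator norm of a matrix, acting on Euclidean space. -/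
noncomputable def opNorm {n : ℕ} (A : Matrix (Fin n) (Fin n) ℂ) : ℝ :=
  ‖Matrix.toEuclideanCLM (𝕜 := ℂ) (n := Fin n) A‖

/-- Weighted geometric mean `A #_α B` for invertible `A`. -/
noncomputable def gmean {n : ℕ} (α : ℝ) (A B : Matrix (Fin n) (Fin n) ℂ) :
    Matrix (Fin n) (Fin n) ℂ :=
  mpow A (1/2) * cfcH (fun x : ℝ => x ^ α) (mpow A (-(1/2)) * B * mpow A (-(1/2))) * mpow A (1/2)

/-!
With `X = E A^{-1/2}` one has `X Xᴴ = E A⁻¹ E` and `Xᴴ X = A^{-1/2} E A^{-1/2}`. Every function of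
`X Xᴴ` intertwines with the same function of `Xᴴ X` through `X` (on a finite spectrum it is a
polynomial), so `Xᴴ f̂(X Xᴴ) X = Xᴴ X · f̂(Xᴴ X) = f(Xᴴ X)`, the last step because `t f̂(t) = f(t)`
for `t ≥ 0`. Conjugating by `A^{1/2}` and using `A^{1/2} Xᴴ = E` gives the identity.
-/

open Polynomial in
theorem SemiconjBy.aeval {R A : Type*} [CommSemiring R] [Semiring A] [Algebra R A]
    {a x y : A} (h : SemiconjBy a x y) (p : R[X]) : SemiconjBy a (aeval x p) (aeval y p) := by
  induction p using Polynomial.induction_on' with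
  | add p q hp hq => simpa only [map_add] using hp.add_right hq
  | monomial k c =>
      simpa only [aeval_monomial] using
        SemiconjBy.mul_right (Algebra.commute_algebraMap_right c a) (h.pow_right k)

section Intertwining

variable {A : Type*} [Ring A] [StarRing A] [Algebra ℝ A] [TopologicalSpace A]
  [ContinuousFunctionalCalculus ℝ A IsSelfAdjoint]

/-- On a finite spectrum every function agrees with a polynomial (Lagrange interpolation), and
polynomials `q` satisfy `q(x x⋆) x = x q(x⋆ x)`. -/
theorem cfc_mul_star_self_mul_eq_mul_cfc_star_mul_self {x : A} (g : ℝ → ℝ)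
    (h₁ : (spectrum ℝ (x * star x)).Finite) (h₂ : (spectrum ℝ (star x * x)).Finite) :
    cfc g (x * star x) * x = x * cfc g (star x * x) := by
  classical
  set q := Lagrange.interpolate (h₁.toFinset ∪ h₂.toFinset) id g
  have hq : ∀ t ∈ h₁.toFinset ∪ h₂.toFinset, g t = q.eval t := fun _ ht =>
    (Lagrange.eval_interpolate_at_node g (Set.injOn_id _) ht).symm
  have e₁ : cfc g (x * star x) = Polynomial.aeval (x * star x) q := by
    rw [← cfc_polynomial q _ (.mul_star_self x)]
    exact cfc_congr fun t ht => hq t (Finset.mem_union_left _ (h₁.mem_toFinset.mpr ht))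
  have e₂ : cfc g (star x * x) = Polynomial.aeval (star x * x) q := by
    rw [← cfc_polynomial q _ (.star_mul_self x)]
    exact cfc_congr fun t ht => hq t (Finset.mem_union_right _ (h₂.mem_toFinset.mpr ht))
  rw [e₁, e₂]
  have hx : SemiconjBy x (star x * x) (x * star x) := (mul_assoc x (star x) x).symm
  exact (hx.aeval q).symm

end Intertwining

open scoped MatrixOrder

section MatrixFunctionalCalculus

variable {n : ℕ}

theorem cfcH_eq_cfc (g : ℝ → ℝ) {A : Matrix (Fin n) (Fin n) ℂ} (hA : A.IsHermitian) :
    cfcH g A = cfc g A := by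
  rw [cfcH, dif_pos hA, hA.cfc_eq]

theorem isHermitian_cfcH (g : ℝ → ℝ) (A : Matrix (Fin n) (Fin n) ℂ) : (cfcH g A).IsHermitian := by
  unfold cfcH
  split_ifs with hA
  · rw [← hA.cfc_eq]
    exact cfc_predicate g A
  · exact isHermitian_zero

theorem cfcH_id {A : Matrix (Fin n) (Fin n) ℂ} (hA : A.IsHermitian) : cfcH id A = A := by
  rw [cfcH_eq_cfc _ hA]
  exact cfc_id ℝ A hA

theorem cfcH_mul_cfcH {g h k : ℝ → ℝ} {A : Matrix (Fin n) (Fin n) ℂ} (hA : A.IsHermitian)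
    (hk : ∀ t ∈ spectrum ℝ A, g t * h t = k t) : cfcH g A * cfcH h A = cfcH k A := by
  rw [cfcH_eq_cfc _ hA, cfcH_eq_cfc _ hA, cfcH_eq_cfc _ hA,
    ← cfc_mul g h A (A.finite_real_spectrum.continuousOn g) (A.finite_real_spectrum.continuousOn h)]
  exact cfc_congr hk

theorem conjTranspose_mul_cfcH_mul_self {g ĝ : ℝ → ℝ} (hg : ∀ t, 0 ≤ t → t * ĝ t = g t)
    (X : Matrix (Fin n) (Fin n) ℂ) : Xᴴ * cfcH ĝ (X * Xᴴ) * X = cfcH g (Xᴴ * X) := by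
  have hXXH := posSemidef_self_mul_conjTranspose X
  have hXHX := posSemidef_conjTranspose_mul_self X
  have hswap : cfcH ĝ (X * Xᴴ) * X = X * cfcH ĝ (Xᴴ * X) := by
    rw [cfcH_eq_cfc _ hXXH.1, cfcH_eq_cfc _ hXHX.1]
    exact cfc_mul_star_self_mul_eq_mul_cfc_star_mul_self ĝ (X * Xᴴ).finite_real_spectrum
      (Xᴴ * X).finite_real_spectrum
  rw [mul_assoc, hswap, ← mul_assoc]
  nth_rewrite 1 [← cfcH_id hXHX.1]
  exact cfcH_mul_cfcH hXHX.1 fun t ht => hg t (spectrum_nonneg_of_nonneg hXHX.nonneg ht)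

end MatrixFunctionalCalculus

section MatrixPower

variable {n : ℕ} {A : Matrix (Fin n) (Fin n) ℂ}

theorem mpow_mul_mpow (hA : A.PosDef) (p q : ℝ) : mpow A p * mpow A q = mpow A (p + q) :=
  cfcH_mul_cfcH hA.1 fun _ ht =>
    (Real.rpow_add (hA.isStrictlyPositive.spectrum_pos ht) p q).symm

theorem mpow_zero (hA : A.IsHermitian) : mpow A 0 = 1 := by
  rw [mpow, cfcH_eq_cfc _ hA]
  simp only [Real.rpow_zero]
  exact cfc_const_one ℝ A

theorem mpow_one (hA : A.IsHermitian) : mpow A 1 = A := by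
  simp only [mpow, Real.rpow_one]
  exact cfcH_id hA

theorem mpow_neg_one (hA : A.PosDef) : mpow A (-1) = A⁻¹ := by
  refine (Matrix.inv_eq_right_inv ?_).symm
  calc A * mpow A (-1) = mpow A 1 * mpow A (-1) := by rw [mpow_one hA.1]
    _ = 1 := by rw [mpow_mul_mpow hA, add_neg_cancel, mpow_zero hA.1]

end MatrixPower

theorem projection_compression_identity_general {n : ℕ}
    (f : ℝ → ℝ)
    (hf0 : f 0 = 0)
    (fhat : ℝ → ℝ)
    (hfhat : ∀ x : ℝ, 0 < x → fhat x = f x / x)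
    (hfhat0 : fhat 0 = 0)
    (A E : Matrix (Fin n) (Fin n) ℂ) (hA : A.PosDef)
    (hE : E.IsHermitian) (hE2 : E * E = E) :
    E * cfcH fhat (E * A⁻¹ * E) * E =
      mpow A (1/2) * cfcH f (mpow A (-(1/2)) * E * mpow A (-(1/2))) * mpow A (1/2) := by
  set B := mpow A (-(1/2))
  set S := mpow A (1/2)
  have hSB : S * B = 1 := by rw [mpow_mul_mpow hA, add_neg_cancel, mpow_zero hA.1]
  have hBS : B * S = 1 := by rw [mpow_mul_mpow hA, neg_add_cancel, mpow_zero hA.1]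
  have hBB : B * B = A⁻¹ := by rw [mpow_mul_mpow hA, ← mpow_neg_one hA]; norm_num
  have hB : B.IsHermitian := isHermitian_cfcH _ A
  have hX : (E * B)ᴴ = B * E := by rw [conjTranspose_mul, hB.eq, hE.eq]
  have hfhat_mul : ∀ t, 0 ≤ t → t * fhat t = f t := by
    intro t ht
    rcases ht.lt_or_eq with ht | rfl
    · rw [hfhat t ht, mul_div_cancel₀ _ ht.ne']
    · rw [hfhat0, hf0, mul_zero]
  have hSX : S * (E * B)ᴴ = E := by rw [hX, ← mul_assoc, hSB, one_mul]
  have hXS : E * B * S = E := by rw [mul_assoc, hBS, mul_one]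
  have hXXH : E * B * (E * B)ᴴ = E * A⁻¹ * E := by rw [hX, ← hBB]; noncomm_ring
  have hXHX : (E * B)ᴴ * (E * B) = B * E * B := by
    rw [hX, mul_assoc B, ← mul_assoc E E, hE2, ← mul_assoc]
  calc E * cfcH fhat (E * A⁻¹ * E) * E
      = S * (E * B)ᴴ * cfcH fhat (E * B * (E * B)ᴴ) * (E * B * S) := by rw [hSX, hXS, hXXH]
    _ = S * ((E * B)ᴴ * cfcH fhat (E * B * (E * B)ᴴ) * (E * B)) * S := by noncomm_ring
    _ = S * cfcH f (B * E * B) * S := by rw [conjTranspose_mul_cfcH_mul_self hfhat_mul, hXHX]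

/-- `E f̂(E A⁻¹ E) E = A^{1/2} f(A^{-1/2} E A^{-1/2}) A^{1/2}`, where `f̂(x) = f(x)/x`
for `x > 0` and `f̂(0) = 0`. -/
theorem projection_compression_identity {n : ℕ}
    (f : ℝ → ℝ)
    (hf_mono : ∀ (k : ℕ) (X Y : Matrix (Fin k) (Fin k) ℂ), X.PosSemidef → Y.PosSemidef →
      (Y - X).PosSemidef → (cfcH f Y - cfcH f X).PosSemidef)
    (hf0 : f 0 = 0)
    (fhat : ℝ → ℝ)
    (hfhat : ∀ x : ℝ, 0 < x → fhat x = f x / x)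
    (hfhat0 : fhat 0 = 0)
    (A E : Matrix (Fin n) (Fin n) ℂ) (hA : A.PosDef)
    (hE : E.IsHermitian) (hE2 : E * E = E) :
    E * cfcH fhat (E * A⁻¹ * E) * E =
      mpow A (1/2) * cfcH f (mpow A (-(1/2)) * E * mpow A (-(1/2))) * mpow A (1/2) :=
  projection_compression_identity_general f hf0 fhat hfhat hfhat0 A E hA hE hE2
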